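/- arXiv:2510.18260 — 6 statements merged into one kernel-verified Lean document; each statement's English description precedes it below -/
import Mathlib

section
/- The parallel addition A₁ ∧ A₂ := A₁(A₁+A₂)†A₂ of two symmetric positive semidefinite matrices is symmetric and positive semidefinite, where † denotes the Moore–Penrose pseudoinverse. -/
/-!
Since `S := A₁ + A₂` is symmetric, so is its Moore–Penrose inverse `B`, by uniqueness of the
latter. From `0 ≤ Aᵢ ≤ S`, `Aᵢ` vanishes on `ker S`, the range of `1 - B S`; that is,
`Aᵢ B S = Aᵢ`. Hence `A₁ B A₂ = A₁ - A₁ B A₁` is symmetric, and expanding `A₁ B A₂ = A₁ B A₂ B S`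
writes it as `(B A₁)ᵀ A₂ (B A₁) + (B A₂)ᵀ A₁ (B A₂)`, a sum of congruences of positive
semidefinite matrices.
-/

/-- `B` is the Moore–Penrose pseudoinverse of `A`. -/
def IsMoorePenroseInv {d : ℕ} (A B : Matrix (Fin d) (Fin d) ℝ) : Prop :=
  A * B * A = A ∧ B * A * B = B ∧ (A * B).transpose = A * B ∧ (B * A).transpose = B * A

open Matrix
open scoped MatrixOrder ComplexOrder

namespace IsMoorePenroseInv

variable {d : ℕ} {A B C : Matrix (Fin d) (Fin d) ℝ}

theorem transpose (h : IsMoorePenroseInv A B) : IsMoorePenroseInv Aᵀ Bᵀ := by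
  obtain ⟨h₁, h₂, h₃, h₄⟩ := h
  refine ⟨?_, ?_, ?_, ?_⟩
  · rw [← transpose_mul, ← transpose_mul, ← Matrix.mul_assoc, h₁]
  · rw [← transpose_mul, ← transpose_mul, ← Matrix.mul_assoc, h₂]
  · rw [← transpose_mul, transpose_transpose, h₄]
  · rw [← transpose_mul, transpose_transpose, h₃]

theorem unique (hB : IsMoorePenroseInv A B) (hC : IsMoorePenroseInv A C) : B = C := by
  obtain ⟨hB₁, hB₂, hB₃, hB₄⟩ := hB
  obtain ⟨hC₁, hC₂, hC₃, hC₄⟩ := hC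
  have hB_eq : B = B * A * C :=
    calc B = B * (A * B)ᵀ := by rw [hB₃, ← Matrix.mul_assoc, hB₂]
      _ = B * (A * C * A * B)ᵀ := by rw [hC₁]
      _ = B * (A * B)ᵀ * (A * C)ᵀ := by simp only [transpose_mul, Matrix.mul_assoc]
      _ = (B * A * B) * A * C := by rw [hB₃, hC₃]; simp only [Matrix.mul_assoc]
      _ = B * A * C := by rw [hB₂]
  have hC_eq : C = B * A * C :=
    calc C = (C * A)ᵀ * C := by rw [hC₄, hC₂]
      _ = (C * (A * B * A))ᵀ * C := by rw [hB₁]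
      _ = (B * A)ᵀ * (C * A)ᵀ * C := by simp only [transpose_mul, Matrix.mul_assoc]
      _ = B * A * (C * A * C) := by rw [hB₄, hC₄]; simp only [Matrix.mul_assoc]
      _ = B * A * C := by rw [hC₂]
  rw [hB_eq, ← hC_eq]

theorem isSymm (hA : A.IsSymm) (h : IsMoorePenroseInv A B) : B.IsSymm := by
  have := h.transpose
  rw [hA.eq] at this
  exact h.unique this |>.symm

end IsMoorePenroseInv

namespace Matrix

variable {n 𝕜 : Type*} [Fintype n] [RCLike 𝕜]

theorem PosSemidef.conjTranspose_mul_mul_eq_zero_iff {M N : Matrix n n 𝕜}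
    (hM : M.PosSemidef) : Nᴴ * M * N = 0 ↔ M * N = 0 := by
  classical
  obtain ⟨R, rfl⟩ := CStarAlgebra.nonneg_iff_eq_star_mul_self.mp hM.nonneg
  rw [star_eq_conjTranspose, conjTranspose_mul_self_mul_eq_zero, Matrix.mul_assoc,
    Matrix.mul_assoc, ← Matrix.mul_assoc Nᴴ, ← conjTranspose_mul,
    conjTranspose_mul_self_eq_zero]

theorem mul_mul_eq_self_of_le {A S B : Matrix n n 𝕜} (hA : 0 ≤ A) (hAS : A ≤ S)
    (hS : S * B * S = S) : A * B * S = A := by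
  classical
  set Q := 1 - B * S
  have hSQ : S * Q = 0 := by
    rw [Matrix.mul_sub, Matrix.mul_one, ← Matrix.mul_assoc, hS, sub_self]
  have hAQ : Qᴴ * A * Q = 0 := by
    refine le_antisymm ?_ (star_left_conjugate_nonneg hA Q)
    simpa only [star_eq_conjTranspose, Matrix.mul_assoc, hSQ, Matrix.mul_zero] using
      star_left_conjugate_le_conjugate hAS Q
  rw [PosSemidef.conjTranspose_mul_mul_eq_zero_iff hA.posSemidef, Matrix.mul_sub, Matrix.mul_one,
    sub_eq_zero] at hAQ
  rw [Matrix.mul_assoc, ← hAQ]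

variable {A₁ A₂ B : Matrix n n 𝕜}

theorem isHermitian_mul_mul_of_mul_mul_add_eq (h₁ : A₁.IsHermitian) (hB : B.IsHermitian)
    (hA₁ : A₁ * B * (A₁ + A₂) = A₁) : (A₁ * B * A₂).IsHermitian := by
  have h : A₁ * B * A₂ = A₁ - A₁ * B * A₁ := by
    rw [eq_sub_iff_add_eq, ← Matrix.mul_add, add_comm, hA₁]
  rw [h]
  exact h₁.sub (by simpa only [h₁.eq] using isHermitian_conjTranspose_mul_mul A₁ hB)

theorem posSemidef_mul_mul_of_mul_mul_add_eq (h₁ : A₁.PosSemidef) (h₂ : A₂.PosSemidef)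
    (hB : B.IsHermitian) (hA₁ : A₁ * B * (A₁ + A₂) = A₁) (hA₂ : A₂ * B * (A₁ + A₂) = A₂) :
    (A₁ * B * A₂).PosSemidef := by
  have hX := isHermitian_mul_mul_of_mul_mul_add_eq h₁.1 hB hA₁
  have key : A₁ * B * A₂ = (B * A₁)ᴴ * A₂ * (B * A₁) + (B * A₂)ᴴ * A₁ * (B * A₂) :=
    calc A₁ * B * A₂ = A₁ * B * (A₂ * B * (A₁ + A₂)) := by rw [hA₂]
      _ = A₁ * B * A₂ * (B * A₁) + (A₁ * B * A₂)ᴴ * (B * A₂) := by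
        rw [hX.eq]; noncomm_ring
      _ = (B * A₁)ᴴ * A₂ * (B * A₁) + (B * A₂)ᴴ * A₁ * (B * A₂) := by
        simp only [conjTranspose_mul, h₁.1.eq, h₂.1.eq, hB.eq, Matrix.mul_assoc]
  rw [key]
  exact (h₂.conjTranspose_mul_mul_same _).add (h₁.conjTranspose_mul_mul_same _)

end Matrix

theorem parallelSum_posSemidef {d : ℕ} (A₁ A₂ B : Matrix (Fin d) (Fin d) ℝ)
    (h₁ : A₁.PosSemidef) (h₂ : A₂.PosSemidef)
    (hB : IsMoorePenroseInv (A₁ + A₂) B) :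
    (A₁ * B * A₂).IsHermitian ∧ (A₁ * B * A₂).PosSemidef := by
  have hB_symm : B.IsHermitian :=
    isHermitian_iff_isSymm.mpr (hB.isSymm (isHermitian_iff_isSymm.mp (h₁.add h₂).1))
  have hA₁ := mul_mul_eq_self_of_le h₁.nonneg (le_add_of_nonneg_right h₂.nonneg) hB.1
  have hA₂ := mul_mul_eq_self_of_le h₂.nonneg (le_add_of_nonneg_left h₁.nonneg) hB.1
  have h := posSemidef_mul_mul_of_mul_mul_add_eq h₁ h₂ hB_symm hA₁ hA₂
  exact ⟨h.1, h⟩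
end

section
/- The parallel addition of symmetric positive semidefinite matrices is commutative: A₁(A₁+A₂)†A₂ = A₂(A₁+A₂)†A₁. -/
/-!
Write `S = A₁ + A₂`, so that `S B S = S`. Since `0 ≤ A₁ ≤ S`, every `K` with `K S = 0` satisfies
`K A₁ Kᴴ = 0` and hence `K A₁ = 0`; for `K = 1 - S B` and `K = 1 - S Bᴴ` this gives
`S B A₁ = A₁ = A₁ B S`. Expanding `S` then turns both `A₁ B A₂` and `A₂ B A₁` into `A₁ - A₁ B A₁`.
-/

open scoped ComplexOrder MatrixOrder

namespace Matrix.PosSemidef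

variable {n 𝕜 : Type*} [Fintype n] [RCLike 𝕜] {A A₁ A₂ B K : Matrix n n 𝕜}

theorem mul_eq_zero_of_mul_mul_conjTranspose_eq_zero (hA : A.PosSemidef)
    (h : K * A * Kᴴ = 0) : K * A = 0 := by
  classical
  obtain ⟨C, rfl⟩ := CStarAlgebra.nonneg_iff_eq_star_mul_self.mp hA.nonneg
  rw [star_eq_conjTranspose, mul_conjTranspose_mul_self_eq_zero, ← self_mul_conjTranspose_eq_zero,
    conjTranspose_mul, conjTranspose_conjTranspose, ← h]
  noncomm_ring

theorem mul_eq_zero_of_mul_add_eq_zero (h₁ : A₁.PosSemidef) (h₂ : A₂.PosSemidef)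
    (h : K * (A₁ + A₂) = 0) : K * A₁ = 0 := by
  have hsum : K * A₁ * Kᴴ + K * A₂ * Kᴴ = 0 := by
    rw [← add_mul, ← mul_add, h, zero_mul]
  exact h₁.mul_eq_zero_of_mul_mul_conjTranspose_eq_zero ((add_eq_zero_iff_of_nonneg
    (h₁.mul_mul_conjTranspose_same K).nonneg (h₂.mul_mul_conjTranspose_same K).nonneg).mp hsum).1

theorem add_mul_mul_eq_self (h₁ : A₁.PosSemidef) (h₂ : A₂.PosSemidef)
    (hB : (A₁ + A₂) * B * (A₁ + A₂) = A₁ + A₂) : (A₁ + A₂) * B * A₁ = A₁ := by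
  classical
  have hK : (1 - (A₁ + A₂) * B) * (A₁ + A₂) = 0 := by
    rw [sub_mul, one_mul, hB, sub_self]
  have := mul_eq_zero_of_mul_add_eq_zero h₁ h₂ hK
  rwa [sub_mul, one_mul, sub_eq_zero, eq_comm] at this

theorem mul_mul_add_eq_self (h₁ : A₁.PosSemidef) (h₂ : A₂.PosSemidef)
    (hB : (A₁ + A₂) * B * (A₁ + A₂) = A₁ + A₂) : A₁ * B * (A₁ + A₂) = A₁ := by
  have hS : (A₁ + A₂)ᴴ = A₁ + A₂ := (h₁.add h₂).isHermitian
  have hB' : (A₁ + A₂) * Bᴴ * (A₁ + A₂) = A₁ + A₂ := by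
    simpa only [conjTranspose_mul, hS, Matrix.mul_assoc] using congrArg (·ᴴ) hB
  simpa only [conjTranspose_mul, conjTranspose_conjTranspose, hS, h₁.isHermitian.eq,
    Matrix.mul_assoc] using congrArg (·ᴴ) (add_mul_mul_eq_self h₁ h₂ hB')

theorem parallelSum_comm (h₁ : A₁.PosSemidef) (h₂ : A₂.PosSemidef)
    (hB : (A₁ + A₂) * B * (A₁ + A₂) = A₁ + A₂) : A₁ * B * A₂ = A₂ * B * A₁ :=
  calc A₁ * B * A₂ = A₁ * B * (A₁ + A₂) - A₁ * B * A₁ := by noncomm_ring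
    _ = (A₁ + A₂) * B * A₁ - A₁ * B * A₁ := by
      rw [mul_mul_add_eq_self h₁ h₂ hB, add_mul_mul_eq_self h₁ h₂ hB]
    _ = A₂ * B * A₁ := by noncomm_ring

end Matrix.PosSemidef

theorem parallelSum_comm {d : ℕ} (A₁ A₂ B : Matrix (Fin d) (Fin d) ℝ)
    (h₁ : A₁.PosSemidef) (h₂ : A₂.PosSemidef)
    (hB : IsMoorePenroseInv (A₁ + A₂) B) :
    A₁ * B * A₂ = A₂ * B * A₁ :=
  h₁.parallelSum_comm h₂ hB.1
end

section
/- For symmetric positive semidefinite matrices A₁, A₂ ∈ ℝ^{d×d}, the kernel of the parallel addition A₁ ∧ A₂ := A₁(A₁+A₂)†A₂ equals the sum (span of the union) of the kernels of A₁ and A₂. -/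
/-!
Write `S = A₁ + A₂`. For positive semidefinite summands `ker S ⊆ ker A₁ ∩ ker A₂`, so any `X` with
`S X S = S` satisfies `A₁ X S = A₁` and, by taking adjoints, `S X A₂ = A₂`. Then `x ∈ ker (A₁ X A₂)`
splits as `X A₂ x ∈ ker A₁` plus `x - X A₂ x ∈ ker A₂`; conversely on `ker A₁` we have `A₂ x = S x`,
so `A₁ X A₂ x = A₁ X S x = A₁ x = 0`.
-/

namespace Matrix

open scoped ComplexOrder

variable {n 𝕜 R : Type*} [Fintype n]

theorem PosSemidef.ker_add_le_left [RCLike 𝕜] {A₁ A₂ : Matrix n n 𝕜}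
    (h₁ : A₁.PosSemidef) (h₂ : A₂.PosSemidef) :
    LinearMap.ker (A₁ + A₂).mulVecLin ≤ LinearMap.ker A₁.mulVecLin := by
  intro x hx
  rw [LinearMap.mem_ker, mulVecLin_apply] at hx ⊢
  have hquad : star x ⬝ᵥ A₁ *ᵥ x + star x ⬝ᵥ A₂ *ᵥ x = 0 := by
    rw [← dotProduct_add, ← add_mulVec, hx, dotProduct_zero]
  rw [← h₁.dotProduct_mulVec_zero_iff]
  exact ((add_eq_zero_iff_of_nonneg (h₁.dotProduct_mulVec_nonneg x)
    (h₂.dotProduct_mulVec_nonneg x)).mp hquad).1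

theorem mul_mul_eq_left_of_ker_le [CommRing R] {S X A : Matrix n n R} (hS : S * X * S = S)
    (hker : LinearMap.ker S.mulVecLin ≤ LinearMap.ker A.mulVecLin) : A * X * S = A := by
  refine ext_iff_mulVec.mpr fun v ↦ ?_
  have hv : (X * S) *ᵥ v - v ∈ LinearMap.ker S.mulVecLin := by
    rw [LinearMap.mem_ker, mulVecLin_apply, mulVec_sub, mulVec_mulVec, ← Matrix.mul_assoc, hS,
      sub_self]
  have hAv := hker hv
  rw [LinearMap.mem_ker, mulVecLin_apply, mulVec_sub, sub_eq_zero, mulVec_mulVec] at hAv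
  rw [Matrix.mul_assoc, ← mulVec_mulVec, ← hAv, mulVec_mulVec]

theorem mul_mul_eq_right_of_ker_le [CommRing R] [StarRing R] {S X A : Matrix n n R}
    (hS_herm : S.IsHermitian) (hA : A.IsHermitian) (hS : S * X * S = S)
    (hker : LinearMap.ker S.mulVecLin ≤ LinearMap.ker A.mulVecLin) : S * X * A = A := by
  have hS' : S * Xᴴ * S = S := by
    simpa only [conjTranspose_mul, hS_herm.eq, Matrix.mul_assoc] using congrArg conjTranspose hS
  simpa only [conjTranspose_mul, hS_herm.eq, hA.eq, Matrix.mul_assoc, conjTranspose_conjTranspose]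
    using congrArg conjTranspose (mul_mul_eq_left_of_ker_le hS' hker)

theorem ker_mul_mul_eq_sup [CommRing R] {A₁ A₂ X : Matrix n n R}
    (h₁ : A₁ * X * (A₁ + A₂) = A₁) (h₂ : (A₁ + A₂) * X * A₂ = A₂) :
    LinearMap.ker (A₁ * X * A₂).mulVecLin =
      LinearMap.ker A₁.mulVecLin ⊔ LinearMap.ker A₂.mulVecLin := by
  refine le_antisymm (fun x hx ↦ ?_) (sup_le (fun x hx ↦ ?_) (fun x hx ↦ ?_))
  all_goals rw [LinearMap.mem_ker, mulVecLin_apply] at hx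
  · have hA₂ : A₂ *ᵥ (x - (X * A₂) *ᵥ x) = 0 := by
      have hsplit : A₂ * X * A₂ = (A₁ + A₂) * X * A₂ - A₁ * X * A₂ := by noncomm_ring
      rw [mulVec_sub, mulVec_mulVec, ← Matrix.mul_assoc, hsplit, h₂, sub_mulVec, hx, sub_zero,
        sub_self]
    refine Submodule.mem_sup.mpr ⟨(X * A₂) *ᵥ x, ?_, x - (X * A₂) *ᵥ x, hA₂, add_sub_cancel _ _⟩
    rwa [LinearMap.mem_ker, mulVecLin_apply, mulVec_mulVec, ← Matrix.mul_assoc]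
  · rw [LinearMap.mem_ker, mulVecLin_apply]
    calc (A₁ * X * A₂) *ᵥ x = (A₁ * X) *ᵥ (A₁ *ᵥ x) + (A₁ * X * A₂) *ᵥ x := by
          rw [hx, mulVec_zero, zero_add]
      _ = (A₁ * X * (A₁ + A₂)) *ᵥ x := by rw [Matrix.mul_add, add_mulVec, mulVec_mulVec]
      _ = 0 := by rw [h₁, hx]
  · rw [LinearMap.mem_ker, mulVecLin_apply, ← mulVec_mulVec, hx, mulVec_zero]

end Matrix

theorem ker_parallelSum {d : ℕ} (A₁ A₂ B : Matrix (Fin d) (Fin d) ℝ)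
    (h₁ : A₁.PosSemidef) (h₂ : A₂.PosSemidef)
    (hB : IsMoorePenroseInv (A₁ + A₂) B) :
    LinearMap.ker (A₁ * B * A₂).mulVecLin =
      LinearMap.ker A₁.mulVecLin ⊔ LinearMap.ker A₂.mulVecLin := by
  have hSBS : (A₁ + A₂) * B * (A₁ + A₂) = A₁ + A₂ := hB.1
  have hker₂ : LinearMap.ker (A₁ + A₂).mulVecLin ≤ LinearMap.ker A₂.mulVecLin := by
    rw [add_comm]
    exact h₂.ker_add_le_left h₁
  exact Matrix.ker_mul_mul_eq_sup
    (Matrix.mul_mul_eq_left_of_ker_le hSBS (h₁.ker_add_le_left h₂))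
    (Matrix.mul_mul_eq_right_of_ker_le (h₁.isHermitian.add h₂.isHermitian) h₂.isHermitian hSBS
      hker₂)
end

section
/- If A₁ is symmetric positive semidefinite and A₂ is symmetric positive definite on ℝ^d, then ker(A₁ ∧ A₂) = ker(A₁), i.e. the kernel of the parallel sum A₁(A₁+A₂)⁻¹A₂ equals the kernel of A₁. -/
open Matrix in

theorem ker_parallelSum_posDef {d : ℕ} (A₁ A₂ : Matrix (Fin d) (Fin d) ℝ)
    (h₁ : A₁.PosSemidef) (h₂ : A₂.PosDef) :
    LinearMap.ker (A₁ * (A₁ + A₂)⁻¹ * A₂).mulVecLin = LinearMap.ker A₁.mulVecLin := by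
  have hS : (A₁ + A₂).PosDef := Matrix.PosDef.posSemidef_add h₁ h₂
  have hSdet : IsUnit (A₁ + A₂).det := hS.det_pos.ne'.isUnit
  have hA₂inj : Function.Injective (A₂.mulVec) :=
    Matrix.mulVec_injective_iff_isUnit.mpr h₂.isUnit
  ext x
  simp only [LinearMap.mem_ker, Matrix.mulVecLin_apply]
  constructor
  · intro h
    set y := (A₁ + A₂)⁻¹ *ᵥ (A₂ *ᵥ x) with hy
    have hA₁y : A₁ *ᵥ y = 0 := by
      rw [hy, Matrix.mulVec_mulVec, Matrix.mulVec_mulVec]; exact h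
    have hSy : (A₁ + A₂) *ᵥ y = A₂ *ᵥ x := by
      rw [hy, Matrix.mulVec_mulVec, Matrix.mul_nonsing_inv _ hSdet, Matrix.one_mulVec]
    have hA₂y : A₂ *ᵥ y = A₂ *ᵥ x := by
      have := hSy
      rwa [Matrix.add_mulVec, hA₁y, zero_add] at this
    have hyx : y = x := hA₂inj hA₂y
    rwa [hyx] at hA₁y
  · intro h
    have hSx : (A₁ + A₂) *ᵥ x = A₂ *ᵥ x := by
      rw [Matrix.add_mulVec, h, zero_add]
    have : (A₁ + A₂)⁻¹ *ᵥ (A₂ *ᵥ x) = x := by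
      rw [← hSx, Matrix.mulVec_mulVec, Matrix.nonsing_inv_mul _ hSdet, Matrix.one_mulVec]
    rw [← Matrix.mulVec_mulVec, ← Matrix.mulVec_mulVec, this, h]
end

section
/- Let L be the matrix-weighted Laplacian of an undirected matrix-weighted graph G, and let v_i, v_j be two vertices. If the intersection over all simple paths P from v_i to v_j of the subspace ker(P) := Σ_{edges e ∈ P} ker(A_e) is the zero subspace, then every x ∈ ker(L) satisfies x_i = x_j. -/
/-!
The quadratic form of the matrix-weighted Laplacian is `xᵀ L x = ½ ∑ (x_v - x_w)ᵀ A_{vw} (x_v - x_w)`,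
summed over ordered adjacent pairs, and every summand is nonnegative. Hence `L x = 0` forces
`A_{vw} (x_v - x_w) = 0` on every edge. Along any path from `v_i` to `v_j` the difference
`x_i - x_j` telescopes into a sum of such edge differences, so it lies in `ker(P)` for every
path `P`, hence in their intersection, which is zero.
-/

open Matrix

namespace Matrix

variable {V m R : Type*} [Fintype V] [Fintype m] [CommRing R]

def weightedLaplacian (E : V → V → Prop) [∀ v w, Decidable (E v w)]
    (A : V → V → Matrix m m R) (x : V → m → R) (v : V) : m → R :=
  ∑ w, if E v w then A v w *ᵥ (x v - x w) else 0

variable {E : V → V → Prop} [∀ v w, Decidable (E v w)] {A : V → V → Matrix m m R}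

theorem two_mul_sum_dotProduct_weightedLaplacian (hE : ∀ v w, E v w → E w v)
    (hA : ∀ v w, A v w = A w v) (x : V → m → R) :
    2 * ∑ v, x v ⬝ᵥ weightedLaplacian E A x v =
      ∑ v, ∑ w, if E v w then (x v - x w) ⬝ᵥ A v w *ᵥ (x v - x w) else 0 := by
  set g : V → V → R := fun v w => if E v w then x v ⬝ᵥ A v w *ᵥ (x v - x w) else 0
  have hsum : ∑ v, x v ⬝ᵥ weightedLaplacian E A x v = ∑ v, ∑ w, g v w := by
    refine Finset.sum_congr rfl fun v _ => ?_
    rw [weightedLaplacian, dotProduct_sum]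
    exact Finset.sum_congr rfl fun w _ => by split_ifs <;> simp [g, *]
  have hpair : ∀ v w, (if E v w then (x v - x w) ⬝ᵥ A v w *ᵥ (x v - x w) else 0) =
      g v w + g w v := by
    intro v w
    by_cases h : E v w
    · simp only [g, if_pos h, if_pos (hE v w h), hA w v,
        show x w - x v = -(x v - x w) by abel, mulVec_neg, dotProduct_neg, sub_dotProduct]
      ring
    · simp [g, h, show ¬E w v from fun h' => h (hE w v h')]
  simp only [hpair, Finset.sum_add_distrib, hsum]
  rw [Finset.sum_comm (f := fun v w => g w v)]
  ring

theorem mulVec_sub_eq_zero_of_weightedLaplacian_eq_zero {A : V → V → Matrix m m ℝ}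
    (hE : ∀ v w, E v w → E w v) (hA : ∀ v w, A v w = A w v)
    (hpsd : ∀ v w, E v w → (A v w).PosSemidef) {x : V → m → ℝ}
    (hx : weightedLaplacian E A x = 0) {v w : V} (hvw : E v w) :
    A v w *ᵥ (x v - x w) = 0 := by
  have hnonneg : ∀ v w,
      0 ≤ if E v w then (x v - x w) ⬝ᵥ A v w *ᵥ (x v - x w) else 0 := by
    intro v w
    split_ifs with h
    · simpa using (hpsd v w h).dotProduct_mulVec_nonneg (x v - x w)
    · exact le_rfl
  have henergy := two_mul_sum_dotProduct_weightedLaplacian hE hA x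
  simp only [hx, Pi.zero_apply, dotProduct_zero, Finset.sum_const_zero, mul_zero] at henergy
  have hrows := (Fintype.sum_eq_zero_iff_of_nonneg fun v => Fintype.sum_nonneg (hnonneg v)).mp
    henergy.symm
  have hterm := congrFun ((Fintype.sum_eq_zero_iff_of_nonneg (hnonneg v)).mp
    (congrFun hrows v)) w
  rw [if_pos hvw] at hterm
  exact (hpsd v w hvw).dotProduct_mulVec_zero_iff _ |>.mp (by simpa using hterm)

end Matrix

theorem Fin.sum_univ_castSucc_sub_succ {M : Type*} [AddCommGroup M] {l : ℕ}
    (f : Fin (l + 1) → M) : ∑ k : Fin l, (f k.castSucc - f k.succ) = f 0 - f (Fin.last l) := by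
  induction l with
  | zero => simp
  | succ l ih =>
    rw [Fin.sum_univ_castSucc]
    simp only [Fin.succ_castSucc, ih (fun k => f k.castSucc), Fin.castSucc_zero, Fin.succ_last]
    abel

theorem Submodule.sub_mem_iSup_ker_of_map_sub_eq_zero {R M N : Type*} [Ring R]
    [AddCommGroup M] [Module R M] [AddCommGroup N] [Module R N] {l : ℕ}
    {f : Fin l → M →ₗ[R] N} {y : Fin (l + 1) → M}
    (hf : ∀ k, f k (y k.castSucc - y k.succ) = 0) :
    y 0 - y (Fin.last l) ∈ ⨆ k, LinearMap.ker (f k) := by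
  rw [← Fin.sum_univ_castSucc_sub_succ]
  exact Submodule.sum_mem _ fun k _ => Submodule.mem_iSup_of_mem k (hf k)

theorem blocks_eq_of_path_kernels_trivial_general {n d : ℕ}
    (E : Fin n → Fin n → Prop) [∀ i j, Decidable (E i j)]
    (hEsymm : ∀ i j, E i j → E j i)
    (A : Fin n → Fin n → Matrix (Fin d) (Fin d) ℝ)
    (hApsd : ∀ i j, E i j → (A i j).PosSemidef)
    (hAsymm : ∀ i j, A i j = A j i)
    (i j : Fin n)
    -- the intersection over all simple paths from `v_i` to `v_j` of the
    -- subspace sums of edge-weight kernels along the path is trivial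
    (hker : (⨅ l : ℕ, ⨅ p : Fin (l + 1) → Fin n,
        ⨅ _ : Function.Injective p ∧ p 0 = i ∧ p (Fin.last l) = j ∧
          ∀ k : Fin l, E (p k.castSucc) (p k.succ),
        ⨆ k : Fin l, LinearMap.ker (A (p k.castSucc) (p k.succ)).mulVecLin) = ⊥) :
    -- every `x` in the kernel of the matrix-weighted Laplacian has `x i = x j`
    ∀ x : Fin n → Fin d → ℝ,
      (∀ v : Fin n, (∑ w : Fin n,
          if E v w then (A v w).mulVec (x v - x w) else 0) = 0) →
      x i = x j := by
  intro x hx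
  rw [← sub_eq_zero, ← Submodule.mem_bot ℝ, ← hker]
  simp only [Submodule.mem_iInf]
  rintro l p ⟨-, rfl, rfl, hp⟩
  exact Submodule.sub_mem_iSup_ker_of_map_sub_eq_zero (y := x ∘ p) fun k =>
    mulVec_sub_eq_zero_of_weightedLaplacian_eq_zero hEsymm hAsymm hApsd (funext hx) (hp k)

theorem blocks_eq_of_path_kernels_trivial {n d : ℕ}
    (E : Fin n → Fin n → Prop) [∀ i j, Decidable (E i j)]
    (hEsymm : ∀ i j, E i j → E j i) (hEirrefl : ∀ i, ¬ E i i)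
    (A : Fin n → Fin n → Matrix (Fin d) (Fin d) ℝ)
    (hApsd : ∀ i j, E i j → (A i j).PosSemidef)
    (hAsymm : ∀ i j, A i j = A j i)
    (i j : Fin n) (hij : i ≠ j)
    -- the intersection over all simple paths from `v_i` to `v_j` of the
    -- subspace sums of edge-weight kernels along the path is trivial
    (hker : (⨅ l : ℕ, ⨅ p : Fin (l + 1) → Fin n,
        ⨅ _ : Function.Injective p ∧ p 0 = i ∧ p (Fin.last l) = j ∧
          ∀ k : Fin l, E (p k.castSucc) (p k.succ),
        ⨆ k : Fin l, LinearMap.ker (A (p k.castSucc) (p k.succ)).mulVecLin) = ⊥) :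
    -- every `x` in the kernel of the matrix-weighted Laplacian has `x i = x j`
    ∀ x : Fin n → Fin d → ℝ,
      (∀ v : Fin n, (∑ w : Fin n,
          if E v w then (A v w).mulVec (x v - x w) else 0) = 0) →
      x i = x j :=
  blocks_eq_of_path_kernels_trivial_general E hEsymm A hApsd hAsymm i j hker
end

section
/- Let G be an undirected matrix-weighted graph on n vertices. If for every pair of distinct vertices v_i, v_j the intersection over all simple paths from v_i to v_j of the subspace sums of edge-weight kernels along each path is {0}, then rank(L) = dn − d, i.e., ker(L) consists exactly of vectors with all blocks equal. -/
/-!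
Pairing the Laplacian with `x` gives `½ ∑_{(v,w) ∈ E} (x v - x w)ᵀ A_{vw} (x v - x w)`, a sum of
nonnegative terms, so `L x = 0` forces `A_{vw} (x v - x w) = 0` on every edge. Along any path from
`i` to `j` the difference `x i - x j` telescopes into a sum of such edge differences, hence lies in
the sum of the edge kernels of that path; by hypothesis the only vector lying in all of these
subspaces is `0`.
-/

open scoped Matrix

section SummationByParts

variable {ι m R : Type*} [Fintype ι] [Fintype m] [CommRing R]

theorem sum_sub_dotProduct_eq_two_mul_of_antisymm (x : ι → m → R) (f : ι → ι → m → R)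
    (hf : ∀ v w, f w v = -f v w) :
    ∑ v, ∑ w, (x v - x w) ⬝ᵥ f v w = 2 * ∑ v, x v ⬝ᵥ ∑ w, f v w := by
  have hswap : ∑ v, ∑ w, x w ⬝ᵥ f v w = -∑ v, ∑ w, x v ⬝ᵥ f v w := by
    have hpair : ∀ v w, x w ⬝ᵥ f v w = -(x w ⬝ᵥ f w v) := fun v w => by
      rw [hf w v, dotProduct_neg]
    simp only [hpair, Finset.sum_neg_distrib]
    rw [Finset.sum_comm]
  simp only [sub_dotProduct, Finset.sum_sub_distrib, hswap, dotProduct_sum]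
  ring

end SummationByParts

theorem sub_mem_iSup_of_forall_sub_mem {M : Type*} [AddCommGroup M] {R : Type*} [Ring R]
    [Module R M] {l : ℕ} (g : Fin (l + 1) → M) (S : Fin l → Submodule R M)
    (hg : ∀ k, g k.castSucc - g k.succ ∈ S k) :
    g 0 - g (Fin.last l) ∈ ⨆ k, S k := by
  induction l with
  | zero => simp
  | succ l ih =>
    have hinit := ih (fun k => g k.castSucc) (fun k => S k.castSucc) (fun k => hg k.castSucc)
    have hlast := Submodule.mem_iSup_of_mem (Fin.last l) (hg (Fin.last l))
    rw [← sub_add_sub_cancel _ (g (Fin.last l).castSucc)]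
    have hmono : ⨆ k : Fin l, S k.castSucc ≤ ⨆ k, S k := iSup_mono' fun k => ⟨k.castSucc, le_rfl⟩
    refine Submodule.add_mem _ (hmono hinit) ?_
    simpa using hlast

section MatrixLaplacian

variable {ι m : Type*} [Fintype ι] [Fintype m]

def matrixLaplacian (E : ι → ι → Prop) [DecidableRel E] (A : ι → ι → Matrix m m ℝ)
    (x : ι → m → ℝ) (v : ι) : m → ℝ :=
  ∑ w, if E v w then A v w *ᵥ (x v - x w) else 0

theorem mulVec_sub_eq_zero_of_matrixLaplacian_eq_zero {E : ι → ι → Prop} [DecidableRel E]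
    (hEsymm : ∀ i j, E i j → E j i) {A : ι → ι → Matrix m m ℝ}
    (hApsd : ∀ i j, E i j → (A i j).PosSemidef) (hAsymm : ∀ i j, A i j = A j i)
    {x : ι → m → ℝ} (hx : ∀ v, matrixLaplacian E A x v = 0) {v w : ι} (hvw : E v w) :
    A v w *ᵥ (x v - x w) = 0 := by
  set f : ι → ι → m → ℝ := fun v w => if E v w then A v w *ᵥ (x v - x w) else 0 with hf
  have hf_antisymm : ∀ v w, f w v = -f v w := by
    intro v w
    by_cases h : E v w
    · simp [hf, h, hEsymm v w h, hAsymm w v, ← Matrix.mulVec_neg]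
    · have h' : ¬E w v := fun h' => h (hEsymm w v h')
      simp [hf, h, h']
  have hf_nonneg : ∀ v w, 0 ≤ (x v - x w) ⬝ᵥ f v w := by
    intro v w
    by_cases h : E v w
    · simpa [hf, h] using (hApsd v w h).dotProduct_mulVec_nonneg (x v - x w)
    · simp [hf, h]
  have hsum : ∑ v, ∑ w, (x v - x w) ⬝ᵥ f v w = 0 := by
    rw [sum_sub_dotProduct_eq_two_mul_of_antisymm x f hf_antisymm]
    have hrow : ∀ v, ∑ w, f v w = 0 := hx
    simp [hrow]
  have hvw_zero : (x v - x w) ⬝ᵥ f v w = 0 := by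
    rw [Fintype.sum_eq_zero_iff_of_nonneg
      (fun v => Fintype.sum_nonneg (hf_nonneg v))] at hsum
    exact congrFun ((Fintype.sum_eq_zero_iff_of_nonneg (hf_nonneg v)).mp (congrFun hsum v)) w
  simp only [hf, if_pos hvw] at hvw_zero
  exact ((hApsd v w hvw).dotProduct_mulVec_zero_iff _).mp (by simpa using hvw_zero)

end MatrixLaplacian

theorem ker_laplacian_eq_consensus_of_all_path_kernels_trivial_general {n d : ℕ}
    (E : Fin n → Fin n → Prop) [∀ i j, Decidable (E i j)]
    (hEsymm : ∀ i j, E i j → E j i)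
    (A : Fin n → Fin n → Matrix (Fin d) (Fin d) ℝ)
    (hApsd : ∀ i j, E i j → (A i j).PosSemidef)
    (hAsymm : ∀ i j, A i j = A j i)
    -- for every pair of distinct vertices, the intersection over all simple
    -- paths joining them of the subspace sums of edge-weight kernels is trivial
    (hker : ∀ i j : Fin n, i ≠ j →
      (⨅ l : ℕ, ⨅ p : Fin (l + 1) → Fin n,
        ⨅ _ : Function.Injective p ∧ p 0 = i ∧ p (Fin.last l) = j ∧
          ∀ k : Fin l, E (p k.castSucc) (p k.succ),
        ⨆ k : Fin l, LinearMap.ker (A (p k.castSucc) (p k.succ)).mulVecLin) = ⊥) :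
    -- the kernel of the matrix-weighted Laplacian consists exactly of the
    -- vectors whose blocks are all equal
    ∀ x : Fin n → Fin d → ℝ,
      (∀ v : Fin n, (∑ w : Fin n,
          if E v w then (A v w).mulVec (x v - x w) else 0) = 0) ↔
      ∃ c : Fin d → ℝ, ∀ v : Fin n, x v = c := by
  intro x
  constructor
  · intro hL
    have hedge : ∀ v w, E v w → A v w *ᵥ (x v - x w) = 0 := fun _ _ =>
      mulVec_sub_eq_zero_of_matrixLaplacian_eq_zero hEsymm hApsd hAsymm hL
    have hall : ∀ i j, x i = x j := by
      intro i j
      obtain rfl | hij := eq_or_ne i j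
      · rfl
      rw [← sub_eq_zero, ← Submodule.mem_bot ℝ, ← hker i j hij]
      simp only [Submodule.mem_iInf]
      rintro l p ⟨-, rfl, rfl, hp⟩
      exact sub_mem_iSup_of_forall_sub_mem (x ∘ p) _ fun k => hedge _ _ (hp k)
    cases n with
    | zero => exact ⟨0, fun v => v.elim0⟩
    | succ n => exact ⟨x 0, fun v => hall v 0⟩
  · rintro ⟨c, hc⟩ v
    simp only [hc, sub_self, Matrix.mulVec_zero, ite_self, Finset.sum_const_zero]

theorem ker_laplacian_eq_consensus_of_all_path_kernels_trivial {n d : ℕ}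
    (E : Fin n → Fin n → Prop) [∀ i j, Decidable (E i j)]
    (hEsymm : ∀ i j, E i j → E j i) (hEirrefl : ∀ i, ¬ E i i)
    (A : Fin n → Fin n → Matrix (Fin d) (Fin d) ℝ)
    (hApsd : ∀ i j, E i j → (A i j).PosSemidef)
    (hAsymm : ∀ i j, A i j = A j i)
    -- for every pair of distinct vertices, the intersection over all simple
    -- paths joining them of the subspace sums of edge-weight kernels is trivial
    (hker : ∀ i j : Fin n, i ≠ j →
      (⨅ l : ℕ, ⨅ p : Fin (l + 1) → Fin n,
        ⨅ _ : Function.Injective p ∧ p 0 = i ∧ p (Fin.last l) = j ∧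
          ∀ k : Fin l, E (p k.castSucc) (p k.succ),
        ⨆ k : Fin l, LinearMap.ker (A (p k.castSucc) (p k.succ)).mulVecLin) = ⊥) :
    -- the kernel of the matrix-weighted Laplacian consists exactly of the
    -- vectors whose blocks are all equal
    ∀ x : Fin n → Fin d → ℝ,
      (∀ v : Fin n, (∑ w : Fin n,
          if E v w then (A v w).mulVec (x v - x w) else 0) = 0) ↔
      ∃ c : Fin d → ℝ, ∀ v : Fin n, x v = c :=
  ker_laplacian_eq_consensus_of_all_path_kernels_trivial_general E hEsymm A hApsd hAsymm hker
end
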